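/- Let q be a real number with q > 0 and q ≠ 1, let h be an integer with h ≥ 1, let x, y be real numbers, and let n be a natural number. Then G_n^{(h)}(x+y | q) = Σ_{j=0}^{n} binom(n,j) · q^{(j-1)y} · G_j^{(h)}(x|q) · [y]_q^{n-j}. -/

import Mathlib

/-!
Write `G_{t+1}(x|q) = (t+1)(1+q)(1-q)^{-t} ∑_k C(t,k) z_k(x)` with
`z_k(x) = (-1)^k q^{kx}/(1+q^{h+k})`, so that `z_k(x+y) = z_k(x) w^k` for `w = q^y`. As
`[y]_q = (1-w)/(1-q)` and `C(N+1,t+1)(t+1) = (N+1) C(N,t)`, clearing the powers of `1-q` turns the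
theorem into the ring identity `∑_t C(N,t) w^t (1-w)^{N-t} ∑_k C(t,k) z_k = ∑_k C(N,k) z_k w^k`.
It follows from `C(N,t) C(t,k) = C(N,k) C(N-k,t-k)` and the binomial expansion of
`(w + (1-w))^{N-k} = 1`.
-/

/-- The q-analogue of a real number `x`: `[x]_q = (1 - q^x)/(1 - q)`,
where `q^x` is a real power of the positive base `q`. -/
noncomputable def qnum (q x : ℝ) : ℝ := (1 - q ^ x) / (1 - q)

/-- The (h,q)-Genocchi polynomial `G_m^{(h)}(x|q)`: `G_0^{(h)}(x|q) = 0` and for `m ≥ 1`,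
`G_m^{(h)}(x|q) = m (1+q)/(1-q)^{m-1} ∑_{k=0}^{m-1} C(m-1,k) (-1)^k q^{kx}/(1+q^{h+k})`,
with real powers of the positive base `q`. -/
noncomputable def hqGenocchi (h : ℤ) (q : ℝ) (m : ℕ) (x : ℝ) : ℝ :=
  if m = 0 then 0
  else (m : ℝ) * (1 + q) / (1 - q) ^ (m - 1) *
    ∑ k ∈ Finset.range m, ((m - 1).choose k : ℝ) * (-1 : ℝ) ^ k *
      q ^ ((k : ℝ) * x) / (1 + q ^ ((h : ℝ) + (k : ℝ)))

open Finset

section BinomialTransform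

variable {R : Type*} [CommRing R]

theorem sum_choose_mul_choose_mul_pow_mul_one_sub_pow (w : R) {N k : ℕ} (hk : k ≤ N) :
    ∑ t ∈ range (N + 1), (N.choose t * t.choose k : R) * w ^ t * (1 - w) ^ (N - t) =
      N.choose k * w ^ k := by
  obtain ⟨m, rfl⟩ := Nat.exists_eq_add_of_le hk
  rw [add_assoc, sum_range_add,
    sum_eq_zero fun t ht => by simp [Nat.choose_eq_zero_of_lt (mem_range.mp ht)], zero_add]
  calc ∑ i ∈ range (m + 1), ((k + m).choose (k + i) * (k + i).choose k : R) * w ^ (k + i) *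
        (1 - w) ^ (k + m - (k + i))
      = (k + m).choose k * w ^ k *
          ∑ i ∈ range (m + 1), w ^ i * (1 - w) ^ (m - i) * (m.choose i : R) := by
        rw [mul_sum]
        refine sum_congr rfl fun i _ => ?_
        have hchoose :
            (k + m).choose (k + i) * (k + i).choose k = (k + m).choose k * m.choose i := by
          simpa using Nat.choose_mul (n := k + m) (k := k + i) (s := k) le_self_add
        rw [← Nat.cast_mul, hchoose, Nat.cast_mul, pow_add, Nat.add_sub_add_left]
        ring
    _ = (k + m).choose k * w ^ k := by rw [← add_pow, add_sub_cancel, one_pow, mul_one]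

theorem sum_choose_mul_pow_mul_sum_choose_mul_one_sub_pow (w : R) (z : ℕ → R) (N : ℕ) :
    ∑ t ∈ range (N + 1), (N.choose t : R) * w ^ t * (∑ k ∈ range (t + 1), t.choose k * z k) *
        (1 - w) ^ (N - t) =
      ∑ k ∈ range (N + 1), N.choose k * z k * w ^ k := by
  have hextend : ∀ t ∈ range (N + 1),
      ∑ k ∈ range (t + 1), (t.choose k : R) * z k = ∑ k ∈ range (N + 1), t.choose k * z k := by
    intro t ht
    refine sum_subset (range_subset_range.mpr (by simpa using ht)) fun k _ hk => ?_
    rw [Nat.choose_eq_zero_of_lt (by simpa using hk), Nat.cast_zero, zero_mul]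
  rw [sum_congr rfl fun t ht => by rw [hextend t ht, mul_sum, sum_mul], sum_comm]
  refine sum_congr rfl fun k hk => ?_
  calc ∑ t ∈ range (N + 1), (N.choose t : R) * w ^ t * (t.choose k * z k) * (1 - w) ^ (N - t)
      = (∑ t ∈ range (N + 1), (N.choose t * t.choose k : R) * w ^ t * (1 - w) ^ (N - t)) * z k := by
        rw [sum_mul]
        exact sum_congr rfl fun t _ => by ring
    _ = N.choose k * z k * w ^ k := by
        rw [sum_choose_mul_choose_mul_pow_mul_one_sub_pow w (mem_range_succ_iff.mp hk)]
        ring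

end BinomialTransform

noncomputable def hqGenocchiSummand (h : ℤ) (q x : ℝ) (k : ℕ) : ℝ :=
  (-1) ^ k * q ^ ((k : ℝ) * x) / (1 + q ^ ((h : ℝ) + k))

theorem hqGenocchiSummand_add (h : ℤ) {q : ℝ} (hq0 : 0 < q) (x y : ℝ) (k : ℕ) :
    hqGenocchiSummand h q (x + y) k = hqGenocchiSummand h q x k * (q ^ y) ^ k := by
  rw [hqGenocchiSummand, hqGenocchiSummand, mul_add, Real.rpow_add hq0, mul_comm (k : ℝ) y,
    Real.rpow_mul_natCast hq0.le]
  ring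

theorem hqGenocchi_succ (h : ℤ) (q : ℝ) (t : ℕ) (x : ℝ) :
    hqGenocchi h q (t + 1) x =
      (t + 1) * (1 + q) / (1 - q) ^ t *
        ∑ k ∈ range (t + 1), t.choose k * hqGenocchiSummand h q x k := by
  simp only [hqGenocchi, hqGenocchiSummand, Nat.add_one_ne_zero, if_false, Nat.add_sub_cancel,
    Nat.cast_add_one, mul_div_assoc, mul_assoc]

theorem choose_mul_rpow_mul_hqGenocchi_succ_mul_qnum_pow (h : ℤ) {q : ℝ} (hq0 : 0 < q)
    (hq1 : q ≠ 1) {N t : ℕ} (ht : t ≤ N) (x y : ℝ) :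
    ((N + 1).choose (t + 1) : ℝ) * q ^ ((((t + 1 : ℕ) : ℝ) - 1) * y) * hqGenocchi h q (t + 1) x *
        qnum q y ^ (N + 1 - (t + 1)) =
      (N + 1) * (1 + q) / (1 - q) ^ N *
        ((N.choose t : ℝ) * (q ^ y) ^ t *
          (∑ k ∈ range (t + 1), t.choose k * hqGenocchiSummand h q x k) *
          (1 - q ^ y) ^ (N - t)) := by
  have hq : 1 - q ≠ 0 := sub_ne_zero.mpr hq1.symm
  have hchoose : ((N + 1).choose (t + 1) : ℝ) * (t + 1) = (N + 1) * N.choose t := by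
    exact_mod_cast (Nat.add_one_mul_choose_eq N t).symm
  have hpow : q ^ ((((t + 1 : ℕ) : ℝ) - 1) * y) = (q ^ y) ^ t := by
    rw [Nat.cast_add_one, add_sub_cancel_right, mul_comm, Real.rpow_mul_natCast hq0.le]
  have hsplit : (1 - q) ^ N = (1 - q) ^ t * (1 - q) ^ (N - t) := by
    rw [← pow_add, Nat.add_sub_cancel' ht]
  rw [hqGenocchi_succ, hpow, qnum, Nat.add_sub_add_right, div_pow, hsplit]
  generalize ∑ k ∈ range (t + 1), (t.choose k : ℝ) * hqGenocchiSummand h q x k = S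
  field_simp
  rw [hchoose]
  ring

theorem statement15_general (q : ℝ) (hq0 : 0 < q) (hq1 : q ≠ 1) (h : ℤ)
    (x y : ℝ) (n : ℕ) :
    hqGenocchi h q n (x + y) =
      ∑ j ∈ Finset.range (n + 1), (n.choose j : ℝ) * q ^ (((j : ℝ) - 1) * y) *
        hqGenocchi h q j x * (qnum q y) ^ (n - j) := by
  cases n with
  | zero => simp [hqGenocchi]
  | succ N =>
    have hzero : hqGenocchi h q 0 x = 0 := if_pos rfl
    have hshift : hqGenocchi h q (N + 1) (x + y) = (N + 1) * (1 + q) / (1 - q) ^ N *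
        ∑ k ∈ range (N + 1), N.choose k * hqGenocchiSummand h q x k * (q ^ y) ^ k := by
      simp only [hqGenocchi_succ, hqGenocchiSummand_add h hq0, mul_assoc]
    rw [sum_range_succ', hzero, mul_zero, zero_mul, add_zero, hshift,
      ← sum_choose_mul_pow_mul_sum_choose_mul_one_sub_pow, mul_sum]
    refine sum_congr rfl fun t ht => ?_
    rw [choose_mul_rpow_mul_hqGenocchi_succ_mul_qnum_pow h hq0 hq1 (mem_range_succ_iff.mp ht)]

theorem statement15 (q : ℝ) (hq0 : 0 < q) (hq1 : q ≠ 1) (h : ℤ) (hh : 1 ≤ h)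
    (x y : ℝ) (n : ℕ) :
    hqGenocchi h q n (x + y) =
      ∑ j ∈ Finset.range (n + 1), (n.choose j : ℝ) * q ^ (((j : ℝ) - 1) * y) *
        hqGenocchi h q j x * (qnum q y) ^ (n - j) :=
  statement15_general q hq0 hq1 h x y n
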